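/- arXiv:1710.10347 — 2 statements merged into one kernel-verified Lean document; each statement's English description precedes it below -/
import Mathlib

section
/- (Discrete Łojasiewicz lemma) For every ε > 0 and every K < ∞, μ ∈ (0,1), there exists δ = δ(ε,K,μ) > 0 with the following property. If f : {0,1,...,T} → ℝ is non-increasing, satisfies |f(t)|^{1+μ} ≤ K(f(t-1) - f(t+1)) for all t = 1,...,T-1, and |f(t)| ≤ δ for all t, then ∑_{j=1}^{T} (f(j-1) - f(j))^{1/2} ≤ ε. -/
/-!
Write `θ = (1 - μ) / 2` and `Φ = signedRpow θ`, i.e. `Φ s = sign s · |s| ^ θ`. Concavity of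
`t ↦ t ^ θ` gives the slope bound `θ (x - y) ≤ R ^ (1 - θ) (Φ x - Φ y)` on `[-R, R]`. At an
interior time `t` take `x = f (t-1)`, `m = f t`, `y = f (t+1)` and `R = |m| + (x - y)`; the
gradient inequality bounds `|m| ^ (1 - θ) = √(|m| ^ (1 + μ))` by `√(K (x - y))`, hence
`√(x - y) ≲ Φ x - Φ y`. So `Φ ∘ f` is a Lyapunov function whose two-step differences dominate
the square roots of the one-step decrements of `f`, and the sum telescopes to `O(δ ^ θ)`;
only the last decrement, at most `√(2 δ)`, is left over.
-/

open Real Finset Filter Topology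

noncomputable def signedRpow (θ s : ℝ) : ℝ := if 0 ≤ s then s ^ θ else -((-s) ^ θ)

lemma abs_signedRpow (θ s : ℝ) : |signedRpow θ s| = |s| ^ θ := by
  unfold signedRpow
  split_ifs with hs
  · rw [abs_of_nonneg hs, abs_of_nonneg (rpow_nonneg hs θ)]
  · rw [abs_neg, abs_of_neg (not_le.mp hs), abs_of_nonneg (rpow_nonneg (by linarith) θ)]

lemma mul_sub_le_rpow_mul_rpow_sub_rpow {θ x y R : ℝ} (hθ0 : 0 ≤ θ) (hθ1 : θ ≤ 1)
    (hy : 0 ≤ y) (hyx : y ≤ x) (hxR : x ≤ R) :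
    θ * (x - y) ≤ R ^ (1 - θ) * (x ^ θ - y ^ θ) := by
  have hx : 0 ≤ x := hy.trans hyx
  have amgm : x ^ (1 - θ) * y ^ θ ≤ (1 - θ) * x + θ * y :=
    geom_mean_le_arith_mean2_weighted (sub_nonneg.2 hθ1) hθ0 hx hy (by ring)
  have hxx : x ^ (1 - θ) * x ^ θ = x := by
    rw [← rpow_add' hx (by rw [sub_add_cancel]; exact one_ne_zero), sub_add_cancel, rpow_one]
  calc θ * (x - y) ≤ x ^ (1 - θ) * (x ^ θ - y ^ θ) := by rw [mul_sub (x ^ (1 - θ)), hxx]; linarith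
    _ ≤ R ^ (1 - θ) * (x ^ θ - y ^ θ) :=
      mul_le_mul_of_nonneg_right (rpow_le_rpow hx hxR (sub_nonneg.2 hθ1))
        (sub_nonneg.2 (rpow_le_rpow hy hyx hθ0))

lemma mul_sub_le_rpow_mul_signedRpow_sub {θ x y R : ℝ} (hθ0 : 0 < θ) (hθ1 : θ ≤ 1)
    (hyx : y ≤ x) (hx : |x| ≤ R) (hy : |y| ≤ R) :
    θ * (x - y) ≤ R ^ (1 - θ) * (signedRpow θ x - signedRpow θ y) := by
  have hxR := (abs_le.mp hx).2
  have hyR := (abs_le.mp hy).1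
  unfold signedRpow
  rcases le_or_gt 0 y with hy0 | hy0
  · rw [if_pos hy0, if_pos (hy0.trans hyx)]
    exact mul_sub_le_rpow_mul_rpow_sub_rpow hθ0.le hθ1 hy0 hyx hxR
  rcases lt_or_ge x 0 with hx0 | hx0
  · rw [if_neg hy0.not_ge, if_neg hx0.not_ge]
    have := mul_sub_le_rpow_mul_rpow_sub_rpow hθ0.le hθ1 (neg_nonneg.2 hx0.le)
      (neg_le_neg hyx) (neg_le.mp hyR)
    linarith
  · rw [if_neg hy0.not_ge, if_pos hx0]
    have hpos := mul_sub_le_rpow_mul_rpow_sub_rpow hθ0.le hθ1 le_rfl hx0 hxR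
    have hneg := mul_sub_le_rpow_mul_rpow_sub_rpow hθ0.le hθ1 le_rfl (neg_nonneg.2 hy0.le)
      (neg_le.mp hyR)
    rw [zero_rpow hθ0.ne', sub_zero] at hpos hneg
    linarith

lemma sqrt_sub_le_mul_signedRpow_sub {K μ x m y : ℝ} (hμ0 : 0 ≤ μ) (hμ1 : μ < 1)
    (hym : y ≤ m) (hmx : m ≤ x) (hxy : x - y ≤ 1) (hgrad : |m| ^ (1 + μ) ≤ K * (x - y)) :
    √(x - y) ≤ (√K + 1) / ((1 - μ) / 2) *
      (signedRpow ((1 - μ) / 2) x - signedRpow ((1 - μ) / 2) y) := by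
  set θ := (1 - μ) / 2 with hθ
  have hθ0 : 0 < θ := by linarith
  set b := x - y with hb
  rcases (sub_nonneg.2 (hym.trans hmx)).eq_or_lt with hb0 | hb0
  · obtain rfl : x = y := by linarith
    simp [hb]
  have hslope : θ * b ≤ (|m| + b) ^ (1 - θ) * (signedRpow θ x - signedRpow θ y) :=
    mul_sub_le_rpow_mul_signedRpow_sub hθ0 (by linarith) (by linarith)
      (abs_le.2 ⟨by linarith [neg_abs_le m], by linarith [le_abs_self m]⟩)
      (abs_le.2 ⟨by linarith [neg_abs_le m], by linarith [le_abs_self m]⟩)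
  have hm : |m| ^ (1 - θ) ≤ √K * √b := by
    calc |m| ^ (1 - θ) = √(|m| ^ (1 + μ)) := by
          rw [sqrt_eq_rpow, ← rpow_mul (abs_nonneg m)]; congr 1; linarith
      _ ≤ √(K * b) := sqrt_le_sqrt hgrad
      _ = √K * √b := sqrt_mul' K hb0.le
  have hb1 : b ^ (1 - θ) ≤ √b := by
    rw [sqrt_eq_rpow]; exact rpow_le_rpow_of_exponent_ge hb0 hxy (by linarith)
  have hR : (|m| + b) ^ (1 - θ) ≤ (√K + 1) * √b :=
    calc (|m| + b) ^ (1 - θ) ≤ |m| ^ (1 - θ) + b ^ (1 - θ) :=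
          rpow_add_le_add_rpow (abs_nonneg m) hb0.le (by linarith) (by linarith)
      _ ≤ (√K + 1) * √b := by linarith
  have hgap : 0 < signedRpow θ x - signedRpow θ y :=
    pos_of_mul_pos_right (lt_of_lt_of_le (by positivity) hslope) (by positivity)
  have hsqrt : 0 < √b := sqrt_pos.2 hb0
  rw [div_mul_eq_mul_div, le_div_iff₀ hθ0]
  refine le_of_mul_le_mul_right ?_ hsqrt
  calc √b * θ * √b = θ * b := by rw [mul_right_comm, mul_self_sqrt hb0.le, mul_comm]
    _ ≤ (|m| + b) ^ (1 - θ) * (signedRpow θ x - signedRpow θ y) := hslope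
    _ ≤ (√K + 1) * √b * (signedRpow θ x - signedRpow θ y) :=
      mul_le_mul_of_nonneg_right hR hgap.le
    _ = (√K + 1) * (signedRpow θ x - signedRpow θ y) * √b := by ring

lemma sum_range_sub_add_two (g : ℕ → ℝ) (n : ℕ) :
    ∑ k ∈ range n, (g k - g (k + 2)) = g 0 + g 1 - g n - g (n + 1) := by
  induction n with
  | zero => simp
  | succ n ih => rw [sum_range_succ, ih]; ring

lemma sum_Icc_sqrt_sub_le {K μ δ : ℝ} (hμ0 : 0 ≤ μ) (hμ1 : μ < 1) (hδ : δ ≤ 1 / 2)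
    {T : ℕ} {f : ℕ → ℝ} (hmono : ∀ i j, i ≤ j → j ≤ T → f j ≤ f i)
    (hgrad : ∀ t, 1 ≤ t → t + 1 ≤ T → |f t| ^ (1 + μ) ≤ K * (f (t - 1) - f (t + 1)))
    (hbound : ∀ t, t ≤ T → |f t| ≤ δ) :
    ∑ j ∈ Icc 1 T, √(f (j - 1) - f j) ≤
      4 * (√K + 1) / ((1 - μ) / 2) * δ ^ ((1 - μ) / 2) + √(2 * δ) := by
  set θ := (1 - μ) / 2 with hθ
  have hθ0 : 0 < θ := by linarith
  have hδ0 : 0 ≤ δ := (abs_nonneg _).trans (hbound 0 T.zero_le)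
  have hreindex : ∑ j ∈ Icc 1 T, √(f (j - 1) - f j) = ∑ k ∈ range T, √(f k - f (k + 1)) := by
    rw [← Ico_add_one_right_eq_Icc, sum_Ico_eq_sum_range, add_tsub_cancel_right]
    exact sum_congr rfl fun k _ => by rw [add_tsub_cancel_left, add_comm 1 k]
  rw [hreindex]
  rcases T with _ | S
  · simp only [range_zero, sum_empty]; positivity
  have hΦ : ∀ t ≤ S + 1, |signedRpow θ (f t)| ≤ δ ^ θ := fun t ht => by
    rw [abs_signedRpow]; exact rpow_le_rpow (abs_nonneg _) (hbound t ht) hθ0.le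
  have hstep : ∀ k ∈ range S, √(f k - f (k + 1)) ≤
      (√K + 1) / θ * (signedRpow θ (f k) - signedRpow θ (f (k + 2))) := by
    intro k hk
    have hkS := mem_range.mp hk
    have hx := abs_le.mp (hbound k (by omega))
    have hy := abs_le.mp (hbound (k + 2) (by omega))
    have hym : f (k + 2) ≤ f (k + 1) := hmono _ _ (by omega) (by omega)
    calc √(f k - f (k + 1)) ≤ √(f k - f (k + 2)) := sqrt_le_sqrt (by linarith)
      _ ≤ _ := sqrt_sub_le_mul_signedRpow_sub hμ0 hμ1 hym (hmono _ _ (by omega) (by omega))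
          (by linarith) (by simpa using hgrad (k + 1) (by omega) (by omega))
  have hlast : √(f S - f (S + 1)) ≤ √(2 * δ) := by
    have hx := abs_le.mp (hbound S (by omega))
    have hy := abs_le.mp (hbound (S + 1) le_rfl)
    exact sqrt_le_sqrt (by linarith)
  have h0 := abs_le.mp (hΦ 0 (by omega))
  have h1 := abs_le.mp (hΦ 1 (by omega))
  have hS := abs_le.mp (hΦ S (by omega))
  have hS1 := abs_le.mp (hΦ (S + 1) le_rfl)
  calc ∑ k ∈ range (S + 1), √(f k - f (k + 1))
      ≤ ∑ k ∈ range S, (√K + 1) / θ * (signedRpow θ (f k) - signedRpow θ (f (k + 2)))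
          + √(2 * δ) := by
        rw [sum_range_succ]; exact add_le_add (sum_le_sum hstep) hlast
    _ = (√K + 1) / θ * (signedRpow θ (f 0) + signedRpow θ (f 1) - signedRpow θ (f S)
          - signedRpow θ (f (S + 1))) + √(2 * δ) := by
        rw [← mul_sum, sum_range_sub_add_two (fun k => signedRpow θ (f k))]
    _ ≤ (√K + 1) / θ * (4 * δ ^ θ) + √(2 * δ) := by gcongr; linarith
    _ = 4 * (√K + 1) / θ * δ ^ θ + √(2 * δ) := by ring

theorem discrete_lojasiewicz_lemma_general (ε K μ : ℝ) (hε : 0 < ε)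
    (hμ0 : 0 < μ) (hμ1 : μ < 1) :
    ∃ δ > 0, ∀ (T : ℕ) (f : ℕ → ℝ),
      (∀ i j, i ≤ j → j ≤ T → f j ≤ f i) →
      (∀ t, 1 ≤ t → t + 1 ≤ T → |f t| ^ (1 + μ) ≤ K * (f (t - 1) - f (t + 1))) →
      (∀ t, t ≤ T → |f t| ≤ δ) →
      ∑ j ∈ Finset.Icc 1 T, Real.sqrt (f (j - 1) - f j) ≤ ε := by
  have hθ0 : 0 < (1 - μ) / 2 := by linarith
  have hcont : ContinuousAt
      (fun δ : ℝ => 4 * (√K + 1) / ((1 - μ) / 2) * δ ^ ((1 - μ) / 2) + √(2 * δ)) 0 :=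
    (continuousAt_const.mul (continuousAt_rpow_const _ _ (Or.inr hθ0.le))).add (by fun_prop)
  have hlim := hcont.tendsto
  simp only [zero_rpow hθ0.ne', mul_zero, sqrt_zero, add_zero] at hlim
  obtain ⟨δ, ⟨hδε, hδ⟩, hδ0⟩ := (eventually_nhdsWithin_of_eventually_nhds
    ((hlim.eventually (gt_mem_nhds hε)).and (Iio_mem_nhds one_half_pos))).and
    (self_mem_nhdsWithin : ∀ᶠ δ in 𝓝[>] (0 : ℝ), 0 < δ) |>.exists
  exact ⟨δ, hδ0, fun T f hmono hgrad hbound =>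
    (sum_Icc_sqrt_sub_le hμ0.le hμ1 (le_of_lt hδ) hmono hgrad hbound).trans hδε.le⟩

/-- Discrete Łojasiewicz lemma. -/
theorem discrete_lojasiewicz_lemma (ε K μ : ℝ) (hε : 0 < ε) (hK : 0 < K)
    (hμ0 : 0 < μ) (hμ1 : μ < 1) :
    ∃ δ > 0, ∀ (T : ℕ) (f : ℕ → ℝ),
      (∀ i j, i ≤ j → j ≤ T → f j ≤ f i) →
      (∀ t, 1 ≤ t → t + 1 ≤ T → |f t| ^ (1 + μ) ≤ K * (f (t - 1) - f (t + 1))) →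
      (∀ t, t ≤ T → |f t| ≤ δ) →
      ∑ j ∈ Finset.Icc 1 T, Real.sqrt (f (j - 1) - f j) ≤ ε :=
  discrete_lojasiewicz_lemma_general ε K μ hε hμ0 hμ1
end

section
/- Suppose F : ℤ ∩ [s₀, s₁] → ℝ is non-increasing and for all integers j in (s₀, s₁), (F(j) - F(L))^{1+μ} ≤ K (F(j-1) - F(j+1)) where L is such that F(j) ≥ F(L) for all j (F bounded below by its limit value), K > 0, 0 < μ < 1, and F(s₀) - F(L) ≤ δ. Then F(j) - F(L) ≤ C(K,μ) (j - s₀)^{-1/μ} for all integers j ∈ (s₀, s₁]. -/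
/-!
Write `a n = F (s₀ + n) - FL` and `α = 1 / μ`. Monotonicity and the recursion give
`a (n + 2) + a (n + 2) ^ (1 + μ) / K ≤ a n`, and `x ↦ x + x ^ (1 + μ) / K` is increasing, so the
bound `a n ≤ C n ^ (-α)` propagates from `n` to `n + 2` as soon as the barrier satisfies the
reverse inequality `C n ^ (-α) ≤ b + b ^ (1 + μ) / K` for `b = C (n + 2) ^ (-α)`. By Bernoulli,
`n ^ (-α) - (n + 2) ^ (-α) ≤ 2 α 3 ^ (α + 1) (n + 2) ^ (-(α + 1))`, while
`b ^ (1 + μ) = C ^ (1 + μ) (n + 2) ^ (-(α + 1))`, so `C ^ μ ≥ 2 α 3 ^ (α + 1) K` suffices.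
The cases `n = 1, 2` follow from `a 0 ≤ δ = C 2 ^ (-α)`.
-/

open Real

lemma rpow_neg_sub_rpow_neg_add_le {α y h : ℝ} (hα : 1 ≤ α) (hy : 0 < y) (hh : 0 ≤ h) :
    y ^ (-α) - (y + h) ^ (-α) ≤ α * h * y ^ (-(α + 1)) := by
  have hyh : 0 < y + h := by linarith
  set u := y / (y + h)
  have hu0 : 0 ≤ u := by positivity
  have hbernoulli : 1 + α * (u - 1) ≤ u ^ α := by
    simpa using one_add_mul_self_le_rpow_one_add (s := u - 1) (by linarith) hα
  have hsplit : (y + h) ^ (-α) = y ^ (-α) * u ^ α := by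
    rw [div_rpow hy.le hyh.le, rpow_neg hy.le, rpow_neg hyh.le]
    field_simp
  have hu : α * (1 - u) ≤ α * h / y := by
    have : 1 - u = h / (y + h) := by simp only [u]; field_simp; ring
    rw [this, mul_div_assoc]
    gcongr
    linarith
  calc y ^ (-α) - (y + h) ^ (-α) = y ^ (-α) * (1 - u ^ α) := by rw [hsplit]; ring
    _ ≤ y ^ (-α) * (α * h / y) := by gcongr; linarith
    _ = α * h * y ^ (-(α + 1)) := by
      rw [neg_add, rpow_add hy, rpow_neg_one]; field_simp

lemma rpow_neg_sub_rpow_neg_add_two_le {α y : ℝ} (hα : 1 ≤ α) (hy : 1 ≤ y) :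
    y ^ (-α) - (y + 2) ^ (-α) ≤ 2 * α * 3 ^ (α + 1) * (y + 2) ^ (-(α + 1)) := by
  have hy0 : 0 < y := by linarith
  have hcompare : y ^ (-(α + 1)) ≤ 3 ^ (α + 1) * (y + 2) ^ (-(α + 1)) := by
    have h3y : (3 * y) ^ (-(α + 1)) ≤ (y + 2) ^ (-(α + 1)) :=
      rpow_le_rpow_of_nonpos (by linarith) (by linarith) (by linarith)
    rw [mul_rpow (by norm_num) hy0.le, rpow_neg (by norm_num : (0:ℝ) ≤ 3)] at h3y
    have h3 : (0 : ℝ) < 3 ^ (α + 1) := by positivity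
    rwa [inv_mul_le_iff₀ h3] at h3y
  calc y ^ (-α) - (y + 2) ^ (-α) ≤ α * 2 * y ^ (-(α + 1)) :=
        rpow_neg_sub_rpow_neg_add_le hα hy0 zero_le_two
    _ ≤ α * 2 * (3 ^ (α + 1) * (y + 2) ^ (-(α + 1))) := by gcongr
    _ = 2 * α * 3 ^ (α + 1) * (y + 2) ^ (-(α + 1)) := by ring

lemma le_of_add_rpow_div_le {K p b x : ℝ} (hK : 0 < K) (hp : 0 < p) (hx : 0 ≤ x)
    (h : b + b ^ p / K ≤ x + x ^ p / K) : b ≤ x := by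
  by_contra! hxb
  have : x ^ p / K < b ^ p / K := by gcongr
  linarith

lemma lojasiewicz_step {K μ C n b₀ b₂ : ℝ} (hK : 0 < K) (hμ0 : 0 < μ) (hμ1 : μ ≤ 1)
    (hC0 : 0 < C) (hC : 2 * (1 / μ) * 3 ^ (1 / μ + 1) * K ≤ C ^ μ) (hn : 1 ≤ n)
    (hb₀ : b₀ ≤ C * n ^ (-(1 / μ))) (hrec : b₂ ^ (1 + μ) ≤ K * (b₀ - b₂)) :
    b₂ ≤ C * (n + 2) ^ (-(1 / μ)) := by
  set α := 1 / μ
  have hα : 1 ≤ α := one_le_one_div hμ0 hμ1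
  have hn2 : 0 < n + 2 := by linarith
  set x := C * (n + 2) ^ (-α)
  have hx_pow : x ^ (1 + μ) = C * C ^ μ * (n + 2) ^ (-(α + 1)) := by
    have : -α * (1 + μ) = -(α + 1) := by simp only [α]; field_simp
    rw [mul_rpow hC0.le (by positivity), ← rpow_mul hn2.le, this, rpow_add hC0, rpow_one]
  have hCK : 2 * α * 3 ^ (α + 1) ≤ C ^ μ / K := by rwa [le_div_iff₀ hK]
  refine le_of_add_rpow_div_le (p := 1 + μ) hK (by linarith) (by positivity) ?_
  calc b₂ + b₂ ^ (1 + μ) / K ≤ b₀ := by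
        have : b₂ ^ (1 + μ) / K ≤ b₀ - b₂ := by rwa [div_le_iff₀' hK]
        linarith
    _ ≤ x + C * (n ^ (-α) - (n + 2) ^ (-α)) := by simp only [x]; linarith
    _ ≤ x + C * (2 * α * 3 ^ (α + 1) * (n + 2) ^ (-(α + 1))) := by
        gcongr
        exact rpow_neg_sub_rpow_neg_add_two_le hα hn
    _ ≤ x + C * (C ^ μ / K * (n + 2) ^ (-(α + 1))) := by gcongr
    _ = x + x ^ (1 + μ) / K := by rw [hx_pow]; ring

theorem le_mul_rpow_neg_of_lojasiewicz {K μ C : ℝ} (hK : 0 < K) (hμ0 : 0 < μ) (hμ1 : μ ≤ 1)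
    (hC0 : 0 < C) (hC : 2 * (1 / μ) * 3 ^ (1 / μ + 1) * K ≤ C ^ μ) {N : ℕ} {a : ℕ → ℝ}
    (ha : AntitoneOn a (Set.Iic N)) (ha0 : ∀ n ≤ N, 0 ≤ a n)
    (hrec : ∀ n, n + 2 ≤ N → a (n + 1) ^ (1 + μ) ≤ K * (a n - a (n + 2)))
    (hstart : a 0 ≤ C * 2 ^ (-(1 / μ))) :
    ∀ n, 1 ≤ n → n ≤ N → a n ≤ C * (n : ℝ) ^ (-(1 / μ)) := by
  have hmono {m n : ℕ} (hmn : m ≤ n) (hn : n ≤ N) : a n ≤ a m :=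
    ha (Set.mem_Iic.2 (hmn.trans hn)) (Set.mem_Iic.2 hn) hmn
  intro n
  induction n using Nat.strong_induction_on with
  | _ n ih =>
    intro hn1 hnN
    match n with
    | 1 =>
      have : (2 : ℝ) ^ (-(1 / μ)) ≤ 1 :=
        rpow_le_one_of_one_le_of_nonpos one_le_two (by simp only [neg_nonpos]; positivity)
      calc a 1 ≤ a 0 := hmono zero_le_one hnN
        _ ≤ C * 2 ^ (-(1 / μ)) := hstart
        _ ≤ C * ((1 : ℕ) : ℝ) ^ (-(1 / μ)) := by simpa using mul_le_of_le_one_right hC0.le this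
    | 2 => exact_mod_cast (hmono zero_le_two hnN).trans hstart
    | m + 3 =>
      have hm : a (m + 3) ≤ a (m + 2) := hmono (by omega) hnN
      have hrec' : a (m + 3) ^ (1 + μ) ≤ K * (a (m + 1) - a (m + 3)) :=
        (rpow_le_rpow (ha0 _ hnN) hm (by linarith)).trans (hrec (m + 1) hnN)
      have hstep := lojasiewicz_step hK hμ0 hμ1 hC0 hC (n := ((m + 1 : ℕ) : ℝ))
        (by norm_num) (ih (m + 1) (by omega) (by omega) (by omega)) hrec'
      convert hstep using 3
      push_cast
      ring

/-- Shifted discrete Łojasiewicz decay estimate toward the limit value `FL`. -/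
theorem shifted_lojasiewicz_decay (K μ : ℝ) (hK : 0 < K) (hμ0 : 0 < μ) (hμ1 : μ < 1) :
    ∃ δ > 0, ∃ C > 0, ∀ (s₀ s₁ : ℤ) (F : ℤ → ℝ) (FL : ℝ),
      (∀ i j, s₀ ≤ i → i ≤ j → j ≤ s₁ → F j ≤ F i) →
      (∀ j, s₀ ≤ j → j ≤ s₁ → FL ≤ F j) →
      (∀ j, s₀ < j → j < s₁ → (F j - FL) ^ (1 + μ) ≤ K * (F (j - 1) - F (j + 1))) →
      F s₀ - FL ≤ δ →
      ∀ j, s₀ < j → j ≤ s₁ → F j - FL ≤ C * ((j - s₀ : ℤ) : ℝ) ^ (-(1 / μ)) := by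
  set C := (2 * (1 / μ) * 3 ^ (1 / μ + 1) * K) ^ (1 / μ)
  have hC : 2 * (1 / μ) * 3 ^ (1 / μ + 1) * K ≤ C ^ μ := by
    simp only [C, one_div]
    rw [rpow_inv_rpow (by positivity) hμ0.ne']
  refine ⟨C * 2 ^ (-(1 / μ)), by positivity, C, by positivity, ?_⟩
  intro s₀ s₁ F FL hmono hlb hrec hδ j hj hj₁
  obtain ⟨n, rfl⟩ : ∃ n : ℕ, j = s₀ + n := ⟨(j - s₀).toNat, by omega⟩
  have hdecay := le_mul_rpow_neg_of_lojasiewicz (a := fun n ↦ F (s₀ + n) - FL)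
    (N := (s₁ - s₀).toNat) hK hμ0 hμ1.le (by positivity) hC
    (fun m hm n hn hmn ↦ by
      simp only [Set.mem_Iic] at hm hn
      linarith [hmono (s₀ + m) (s₀ + n) (by omega) (by omega) (by omega)])
    (fun n hn ↦ by linarith [hlb (s₀ + n) (by omega) (by omega)])
    (fun n hn ↦ by
      have := hrec (s₀ + (n + 1 : ℕ)) (by omega) (by omega)
      rw [show s₀ + ((n + 1 : ℕ) : ℤ) - 1 = s₀ + n by push_cast; ring,
        show s₀ + ((n + 1 : ℕ) : ℤ) + 1 = s₀ + (n + 2 : ℕ) by push_cast; ring] at this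
      simpa only [sub_sub_sub_cancel_right] using this)
    (by simpa using hδ) n (by omega) (by omega)
  simpa using hdecay
end
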